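/- arXiv:0904.4854 — 5 statements merged into one kernel-verified Lean document; each statement's English description precedes it below -/
import Mathlib

section
/- The partial Jucys-Murphy elements ξ_1, …, ξ_n pairwise commute, where ξ_i = Σ_{j<i} ((j i), {j,i}) in the algebra of partial permutations B_n. -/
abbrev PPn (n : ℕ) : Type := {p : Equiv.Perm (Fin n) × Finset (Fin n) // ∀ x ∉ p.2, p.1 x = x}

instance (n : ℕ) : Monoid (PPn n) where
  mul p q := ⟨(p.1.1 * q.1.1, p.1.2 ∪ q.1.2), by
    intro x hx
    simp only [Finset.mem_union, not_or] at hx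
    simp [Equiv.Perm.mul_apply, q.2 x hx.2, p.2 x hx.1]⟩
  one := ⟨(1, ∅), fun x _ => rfl⟩
  mul_assoc p q r := Subtype.ext (Prod.ext (mul_assoc _ _ _) (Finset.union_assoc _ _ _))
  one_mul p := Subtype.ext (Prod.ext (one_mul _) (Finset.empty_union _))
  mul_one p := Subtype.ext (Prod.ext (mul_one _) (Finset.union_empty _))

abbrev Bn (n : ℕ) : Type := MonoidAlgebra ℚ (PPn n)

def ppSwap {n : ℕ} (j i : Fin n) : PPn n := ⟨(Equiv.swap j i, {j, i}), by
  intro x hx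
  simp only [Finset.mem_insert, Finset.mem_singleton, not_or] at hx
  exact Equiv.swap_apply_of_ne_of_ne hx.1 hx.2⟩

noncomputable def xi (n : ℕ) (i : Fin n) : Bn n :=
  ∑ j ∈ Finset.univ.filter (· < i), MonoidAlgebra.of ℚ (PPn n) (ppSwap j i)

/-!
For `a, b < k`, conjugation by `((a b), {a, b})` sends the summand `((j k), {j, k})` of `ξ_k` to
`(((a b) j, k), {(a b) j, k})`: on permutations this is conjugation of a transposition, and the
supports agree since `(a b)` maps `{a, b}` to itself and fixes everything else. So `(a b)` merely
permutes the summands of `ξ_k`, and `ξ_k` commutes with every summand `((j i), {j, i})`, `j < i < k`,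
of `ξ_i`.
-/

open Equiv

theorem ppSwap_mul_ppSwap {n : ℕ} {a b k : Fin n} (j : Fin n) (ha : k ≠ a) (hb : k ≠ b) :
    ppSwap a b * ppSwap j k = ppSwap (swap a b j) k * ppSwap a b := by
  refine Subtype.ext (Prod.ext ?_ ?_)
  · change swap a b * swap j k = swap (swap a b j) k * swap a b
    conv_rhs => rw [← swap_apply_of_ne_of_ne ha hb]
    rw [swap_apply_apply, swap_inv, mul_assoc, swap_mul_self, mul_one]
  · change {a, b} ∪ {j, k} = {swap a b j, k} ∪ {a, b}
    ext x
    simp only [Finset.mem_union, Finset.mem_insert, Finset.mem_singleton, swap_apply_def]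
    split_ifs <;> subst_vars <;> tauto

theorem commute_ppSwap_xi {n : ℕ} {a b k : Fin n} (ha : a < k) (hb : b < k) :
    Commute (MonoidAlgebra.of ℚ (PPn n) (ppSwap a b)) (xi n k) := by
  rw [Commute, SemiconjBy, xi, Finset.mul_sum, Finset.sum_mul]
  refine Finset.sum_equiv (swap a b) (fun j => ?_) (fun j _ => ?_)
  · simp only [Finset.mem_filter, Finset.mem_univ, true_and, swap_apply_def]
    split_ifs <;> subst_vars <;> tauto
  · rw [← map_mul, ← map_mul, ppSwap_mul_ppSwap j ha.ne' hb.ne']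

theorem commute_xi_of_lt {n : ℕ} {i k : Fin n} (h : i < k) : Commute (xi n i) (xi n k) :=
  Commute.sum_left _ _ _ fun _ hj => commute_ppSwap_xi ((Finset.mem_filter.1 hj).2.trans h) h

/-- the partial Jucys-Murphy elements pairwise commute in `B_n`. -/
theorem partial_JM_commute (n : ℕ) (i k : Fin n) : xi n i * xi n k = xi n k * xi n i := by
  rcases lt_trichotomy i k with h | rfl | h
  · exact (commute_xi_of_lt h).eq
  · rfl
  · exact (commute_xi_of_lt h).symm.eq
end

section
/- For each i > 1, the partial Jucys-Murphy element ξ_i commutes with every element of the image of B_{i−1} in B_n, i.e., with every partial permutation (σ,d) with d ⊆ {1,…,i−1}. -/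
/-- `ξ_i` commutes with every partial permutation `(σ,d)` with `d ⊆ {1,…,i−1}`,
i.e. with the image of `B_{i-1}` in `B_n`. -/
theorem xi_commutes_with_lower (n : ℕ) (i : Fin n) (hi : 0 < (i : ℕ))
    (σ : Equiv.Perm (Fin n)) (d : Finset (Fin n)) (hfix : ∀ x ∉ d, σ x = x)
    (hd : ∀ x ∈ d, x < i) :
    MonoidAlgebra.of ℚ (PPn n) ⟨(σ, d), hfix⟩ * xi n i
      = xi n i * MonoidAlgebra.of ℚ (PPn n) ⟨(σ, d), hfix⟩ := by

  classical
  have hσi : σ i = i := hfix i (fun h => lt_irrefl _ (hd i h))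
  have hσd : ∀ x, x ∈ d → σ x ∈ d := by
    intro x hx
    by_contra h
    have h1 : σ (σ x) = σ x := hfix (σ x) h
    have h2 : σ x = x := σ.injective h1
    rw [h2] at h
    exact h hx
  have hσd' : ∀ x, σ x ∈ d → x ∈ d := by
    intro x hx
    by_contra h
    rw [hfix x h] at hx
    exact h hx
  have hσlt : ∀ j : Fin n, j < i → σ j < i := by
    intro j hj
    by_cases h : j ∈ d
    · exact hd _ (hσd j h)
    · rw [hfix j h]; exact hj
  have hσlt' : ∀ j : Fin n, σ j < i → j < i := by
    intro j hj
    by_cases h : j ∈ d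
    · exact hd _ h
    · rwa [hfix j h] at hj
  have key : ∀ j : Fin n, j < i →
      (⟨(σ, d), hfix⟩ : PPn n) * ppSwap j i = ppSwap (σ j) i * ⟨(σ, d), hfix⟩ := by
    intro j hj
    refine Subtype.ext (Prod.ext ?_ ?_)
    · show σ * Equiv.swap j i = Equiv.swap (σ j) i * σ
      have : Equiv.swap (σ j) i = Equiv.swap (σ j) (σ i) := by rw [hσi]
      rw [this, Equiv.swap_apply_apply]
      group
    · show d ∪ {j, i} = ({σ j, i} : Finset (Fin n)) ∪ d
      by_cases h : j ∈ d
      · have h2 : σ j ∈ d := hσd j h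
        ext x
        simp only [Finset.mem_union, Finset.mem_insert, Finset.mem_singleton]
        constructor
        · rintro (hx | hx | hx)
          · exact Or.inr hx
          · exact Or.inr (hx ▸ h)
          · exact Or.inl (Or.inr hx)
        · rintro ((hx | hx) | hx)
          · exact Or.inl (hx ▸ h2)
          · exact Or.inr (Or.inr hx)
          · exact Or.inl hx
      · rw [hfix j h, Finset.union_comm]
  simp only [xi, Finset.mul_sum, Finset.sum_mul, ← map_mul]
  rw [Finset.sum_congr rfl (fun j hj => by
    rw [key j (by simpa using hj)])]
  refine Finset.sum_nbij' (fun j => σ j) (fun j => σ.symm j) ?_ ?_ ?_ ?_ ?_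
  · intro j hj
    simp only [Finset.mem_filter, Finset.mem_univ, true_and] at hj ⊢
    exact hσlt j hj
  · intro j hj
    simp only [Finset.mem_filter, Finset.mem_univ, true_and] at hj ⊢
    apply hσlt'
    simpa using hj
  · intro j _; simp
  · intro j _; simp
  · intro j _; rfl
end

section
/- In the algebra of partial permutations, the elementary symmetric polynomial in the partial Jucys-Murphy elements satisfies e_ℓ(ξ_1,…,ξ_n) = Σ_{σ ∈ S_n, κ(σ) = n−ℓ} (σ, supp(σ)), where κ(σ) is the number of cycles of σ (including fixed points) and supp(σ) is the set of non-fixed points of σ. -/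
/-- Elementary symmetric polynomial evaluated at the partial Jucys-Murphy elements
(products taken in increasing order of the indices, which is unambiguous since the `ξ_i`
commute). -/
noncomputable def eXi (n ℓ : ℕ) : Bn n :=
  ∑ s ∈ Finset.univ.powersetCard ℓ, ((s.sort (· ≤ ·)).map (xi n)).prod

/-- number of cycles of `σ`, including fixed points -/
def kappa {n : ℕ} (σ : Equiv.Perm (Fin n)) : ℕ :=
  σ.cycleType.card + (Finset.univ.filter fun x => σ x = x).card


/-!
Write `s_m = {i | i < m}` and restrict both sides to indices, resp. supports, in `s_m`.
Both then satisfy `E(s_{m+1}, k+1) = E(s_m, k+1) + E(s_m, k) * ξ_m`. On the left this holds because `m` is the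
largest index, so `ξ_m` is the last factor of every product containing it. On the right, a
permutation `τ` supported in `s_{m+1}` with `τ m ≠ m` factors uniquely as `σ * (j m)` with
`j = τ⁻¹ m < m` and `σ` supported in `s_m`; multiplying by `(j m)` inserts the fixed point `m`
into the cycle of `j`, so `κ` drops by exactly one, and the partial permutations multiply
correctly since `supp τ = supp σ ∪ {j, m}`.
-/

open Equiv Equiv.Perm Finset

theorem Finset.sort_insert_of_forall_lt {α : Type*} [LinearOrder α] {s : Finset α} {a : α}
    (h : ∀ b ∈ s, b < a) : (insert a s).sort (· ≤ ·) = s.sort (· ≤ ·) ++ [a] := by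
  have ha : a ∉ s := fun ha => lt_irrefl a (h a ha)
  refine List.Perm.eq_of_pairwise' (pairwise_sort _ _) ?_ ?_
  · refine List.pairwise_append.mpr ⟨pairwise_sort _ _, List.pairwise_singleton _ a, ?_⟩
    simp only [mem_sort, List.mem_singleton]
    rintro b hb _ rfl
    exact (h b hb).le
  · rw [← Multiset.coe_eq_coe, ← Multiset.coe_add, sort_eq, sort_eq, insert_val_of_notMem ha,
      Multiset.coe_singleton, add_comm, Multiset.singleton_add]

section OrderedEsymm

variable {α R : Type*} [LinearOrder α] [Semiring R]

def orderedEsymm (f : α → R) (s : Finset α) (k : ℕ) : R :=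
  ∑ t ∈ s.powersetCard k, ((t.sort (· ≤ ·)).map f).prod

theorem orderedEsymm_zero (f : α → R) (s : Finset α) : orderedEsymm f s 0 = 1 := by
  simp [orderedEsymm]

theorem orderedEsymm_of_card_lt (f : α → R) {s : Finset α} {k : ℕ} (h : #s < k) :
    orderedEsymm f s k = 0 := by
  rw [orderedEsymm, powersetCard_eq_empty.mpr h, sum_empty]

theorem orderedEsymm_insert_succ (f : α → R) {s : Finset α} {a : α} (h : ∀ b ∈ s, b < a)
    (k : ℕ) :
    orderedEsymm f (insert a s) (k + 1) = orderedEsymm f s (k + 1) + orderedEsymm f s k * f a := by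
  have ha : a ∉ s := fun ha => lt_irrefl a (h a ha)
  have hat : ∀ t ∈ s.powersetCard k, a ∉ t := fun t ht hat => ha ((mem_powersetCard.mp ht).1 hat)
  rw [orderedEsymm, powersetCard_succ_insert ha, sum_union, sum_image]
  · rw [orderedEsymm, orderedEsymm, sum_mul]
    refine congrArg _ (sum_congr rfl fun t ht => ?_)
    rw [sort_insert_of_forall_lt fun b hb => h b ((mem_powersetCard.mp ht).1 hb), List.map_append,
      List.prod_append, List.map_singleton, List.prod_singleton]
  · intro t ht u hu htu
    rw [← erase_insert (hat t ht), ← erase_insert (hat u hu), htu]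
  · refine disjoint_left.mpr fun t ht ht' => ?_
    obtain ⟨u, -, rfl⟩ := mem_image.mp ht'
    exact ha ((mem_powersetCard.mp ht).1 (mem_insert_self a u))

end OrderedEsymm

namespace Equiv.Perm

theorem support_mul_swap {α : Type*} [DecidableEq α] [Fintype α] {σ : Perm α} {j a : α}
    (ha : σ a = a) (hj : j ≠ a) : (σ * swap j a).support = σ.support ∪ {j, a} := by
  ext x
  have := σ.injective.eq_iff (a := j) (b := a)
  simp only [mem_support, mul_apply, mem_union, mem_insert, mem_singleton, swap_apply_def]
  split_ifs <;> grind

theorem mul_swap_inv_apply_right {α : Type*} [DecidableEq α] {σ : Perm α} {j a : α}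
    (ha : σ a = a) : (σ * swap j a)⁻¹ a = j := by
  rw [mul_inv_rev, swap_inv, mul_apply, inv_eq_iff_eq.mpr ha.symm, swap_apply_right]

theorem support_mul_swap_subset_insert_iff {α : Type*} [DecidableEq α] [Fintype α]
    {σ : Perm α} {j a : α} {s : Finset α} (ha : σ a = a) (hj : j ≠ a) :
    (σ * swap j a).support ⊆ insert a s ↔ σ.support ⊆ s ∧ j ∈ s := by
  rw [support_mul_swap ha hj, union_subset_iff, subset_insert_iff_of_notMem (notMem_support.mpr ha),
    insert_subset_iff, singleton_subset_iff, mem_insert, mem_insert]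
  simp [hj]

end Equiv.Perm

section Kappa

variable {n : ℕ}

theorem kappa_add_card_support (σ : Perm (Fin n)) :
    kappa σ + #σ.support = Multiset.card σ.cycleType + n := by
  rw [kappa, add_assoc, support, card_filter_add_card_filter_not, card_univ, Fintype.card_fin]

theorem kappa_eq_iff_eq_one {σ : Perm (Fin n)} : kappa σ = n ↔ σ = 1 := by
  refine ⟨fun h => ?_, fun h => by simp [h, kappa]⟩
  have hσ := kappa_add_card_support σ
  have hcard : Multiset.card σ.cycleType * 2 ≤ #σ.support := by
    rw [← sum_cycleType, ← smul_eq_mul]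
    exact Multiset.card_nsmul_le_sum fun _ hk => two_le_of_mem_cycleType (σ := σ) hk
  rw [← card_cycleType_eq_zero]
  omega

theorem kappa_inv (σ : Perm (Fin n)) : kappa σ⁻¹ = kappa σ := by
  have h := kappa_add_card_support σ⁻¹
  rw [cycleType_inv, support_inv] at h
  have := kappa_add_card_support σ
  omega

theorem kappa_mul_add_card_support_of_isCycle {c r : Perm (Fin n)} (hc : c.IsCycle)
    (h : Disjoint c r) : kappa (c * r) + #c.support = kappa r + 1 := by
  have hcr := kappa_add_card_support (c * r)
  have hr := kappa_add_card_support r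
  rw [h.cycleType_mul, hc.cycleType, h.card_support_mul, Multiset.card_add,
    Multiset.card_singleton] at hcr
  omega

theorem kappa_swap_mul {f : Perm (Fin n)} {x : Fin n} (hx : f x ≠ x) :
    kappa (swap x (f x) * f) = kappa f + 1 := by
  set c := f.cycleOf x
  set r := f * c⁻¹
  have hc : c.IsCycle := f.isCycle_cycleOf hx
  have hcx : c x = f x := f.cycleOf_apply_self x
  have hcx' : c (c x) = f (f x) := by rw [hcx, cycleOf_apply_apply_self]
  have hdisj : Disjoint c r :=
    (disjoint_mul_inv_of_mem_cycleFactorsFinset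
      (cycleOf_mem_cycleFactorsFinset_iff.mpr (mem_support.mpr hx))).symm
  have hf : c * r = f := by rw [hdisj.commute.eq]; exact inv_mul_cancel_right f c
  have hfc := kappa_mul_add_card_support_of_isCycle hc hdisj
  rw [← hcx, ← hf, ← mul_assoc]
  by_cases hffx : f (f x) = x
  · have hcs : c = swap x (c x) :=
      hc.eq_swap_of_apply_apply_eq_self (by rwa [hcx]) (by rwa [hcx'])
    have : #c.support = 2 := by rw [hcs, card_support_swap (by rwa [hcx, ne_comm])]
    nth_rewrite 2 [hcs]
    rw [swap_mul_self, one_mul]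
    omega
  · have hc' : (swap x (c x) * c).IsCycle := hc.swap_mul (by rwa [hcx]) (by rwa [hcx'])
    have hsupp : (swap x (c x) * c).support = c.support \ {x} :=
      support_swap_mul_eq c x (by rwa [hcx'])
    have hdisj' : Disjoint (swap x (c x) * c) r :=
      hdisj.mono (hsupp ▸ sdiff_subset) le_rfl
    have hcard : #(swap x (c x) * c).support + 1 = #c.support := by
      rw [hsupp]
      exact card_sdiff_add_card_eq_card (singleton_subset_iff.mpr (mem_support.mpr (by rwa [hcx])))
    have := kappa_mul_add_card_support_of_isCycle hc' hdisj'
    omega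

theorem kappa_mul_swap {σ : Perm (Fin n)} {j a : Fin n} (ha : σ a = a) (hj : j ≠ a) :
    kappa (σ * swap j a) + 1 = kappa σ := by
  have hfa := mul_swap_inv_apply_right (j := j) ha
  have hσ : σ⁻¹ = swap a ((σ * swap j a)⁻¹ a) * (σ * swap j a)⁻¹ := by
    rw [hfa, swap_comm, mul_inv_rev, swap_inv, swap_mul_self_mul]
  rw [← kappa_inv σ, hσ, kappa_swap_mul (by rwa [hfa]), kappa_inv]

end Kappa

section PartialPermutations

variable {n : ℕ}

def ppOfPerm (σ : Perm (Fin n)) : PPn n :=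
  ⟨(σ, σ.support), fun _ hx => notMem_support.mp hx⟩

theorem ppOfPerm_one : ppOfPerm (1 : Perm (Fin n)) = 1 :=
  Subtype.ext (Prod.ext rfl support_one)

theorem ppOfPerm_mul_ppSwap {σ : Perm (Fin n)} {j a : Fin n} (ha : σ a = a) (hj : j ≠ a) :
    ppOfPerm σ * ppSwap j a = ppOfPerm (σ * swap j a) :=
  Subtype.ext (Prod.ext rfl (support_mul_swap ha hj).symm)

/-- The cycle condition is `κ σ + ℓ = n` rather than `κ σ = n - ℓ`, which avoids truncated
subtraction and makes the recursion below valid for every `ℓ`. -/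
def permsWithin (s : Finset (Fin n)) (ℓ : ℕ) : Finset (Perm (Fin n)) :=
  univ.filter fun σ => σ.support ⊆ s ∧ kappa σ + ℓ = n

theorem mem_permsWithin {s : Finset (Fin n)} {ℓ : ℕ} {σ : Perm (Fin n)} :
    σ ∈ permsWithin s ℓ ↔ σ.support ⊆ s ∧ kappa σ + ℓ = n := by
  simp [permsWithin]

theorem permsWithin_zero (s : Finset (Fin n)) : permsWithin s 0 = {1} := by
  ext σ
  rw [mem_permsWithin, mem_singleton, add_zero, kappa_eq_iff_eq_one]
  exact ⟨And.right, fun h => ⟨by simp [h], h⟩⟩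

theorem permsWithin_empty_succ (k : ℕ) : permsWithin (∅ : Finset (Fin n)) (k + 1) = ∅ := by
  ext σ
  rw [mem_permsWithin, subset_empty, support_eq_empty_iff]
  simp only [notMem_empty, iff_false, not_and]
  rintro rfl
  rw [kappa_eq_iff_eq_one.mpr rfl]
  omega

theorem filter_apply_eq_permsWithin_insert {s : Finset (Fin n)} {a : Fin n} (has : a ∉ s)
    (ℓ : ℕ) : (permsWithin (insert a s) ℓ).filter (fun σ => σ a = a) = permsWithin s ℓ := by
  ext σ
  simp only [mem_filter, mem_permsWithin]
  have : a ∉ σ.support ↔ σ a = a := notMem_support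
  constructor
  · rintro ⟨⟨hσs, hκ⟩, hσa⟩
    exact ⟨(subset_insert_iff_of_notMem (this.mpr hσa)).mp hσs, hκ⟩
  · rintro ⟨hσs, hκ⟩
    exact ⟨⟨hσs.trans (subset_insert a s), hκ⟩, this.mp fun h => has (hσs h)⟩

theorem sum_permsWithin_product_mul_swap {M : Type*} [AddCommMonoid M] (g : Perm (Fin n) → M)
    {s : Finset (Fin n)} {a : Fin n} (has : a ∉ s) (k : ℕ) :
    ∑ p ∈ permsWithin s k ×ˢ s, g (p.1 * swap p.2 a)
      = ∑ τ ∈ (permsWithin (insert a s) (k + 1)).filter (fun τ => τ a ≠ a), g τ := by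
  refine sum_nbij' (fun p => p.1 * swap p.2 a) (fun τ => (τ * swap (τ⁻¹ a) a, τ⁻¹ a))
    ?_ ?_ ?_ ?_ fun _ _ => rfl
  · rintro ⟨σ, j⟩ hp
    obtain ⟨⟨hσs, hκ⟩, hj⟩ : (σ.support ⊆ s ∧ kappa σ + k = n) ∧ j ∈ s := by
      simpa [mem_permsWithin] using hp
    have hσa : σ a = a := notMem_support.mp fun h => has (hσs h)
    have hja : j ≠ a := ne_of_mem_of_not_mem hj has
    have := kappa_mul_swap hσa hja
    dsimp only
    refine mem_filter.mpr ⟨mem_permsWithin.mpr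
      ⟨(support_mul_swap_subset_insert_iff hσa hja).mpr ⟨hσs, hj⟩, by omega⟩, ?_⟩
    rw [mul_apply, swap_apply_right, ← hσa]
    exact σ.injective.ne hja
  · intro τ hτ
    obtain ⟨⟨hτs, hκ⟩, hτa⟩ : (τ.support ⊆ insert a s ∧ kappa τ + (k + 1) = n) ∧ τ a ≠ a := by
      simpa [mem_permsWithin] using hτ
    have hτj : τ (τ⁻¹ a) = a := τ.apply_symm_apply a
    have hja : τ⁻¹ a ≠ a := fun h => hτa (by rwa [h] at hτj)
    have hσa : (τ * swap (τ⁻¹ a) a) a = a := by rw [mul_apply, swap_apply_right, hτj]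
    have hστ := mul_swap_mul_self (τ⁻¹ a) a τ
    have := kappa_mul_swap hσa hja
    rw [← hστ, support_mul_swap_subset_insert_iff hσa hja] at hτs
    rw [hστ] at this
    refine mem_product.mpr ⟨mem_permsWithin.mpr ⟨hτs.1, ?_⟩, hτs.2⟩
    show kappa (τ * swap (τ⁻¹ a) a) + k = n
    omega
  · rintro ⟨σ, j⟩ hp
    have hσa : σ a = a := notMem_support.mp fun h =>
      has ((mem_permsWithin.mp (mem_product.mp hp).1).1 h)
    simp only [mul_swap_inv_apply_right hσa, mul_swap_mul_self]
  · intro τ _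
    exact mul_swap_mul_self _ _ τ

noncomputable def permSumWithin (s : Finset (Fin n)) (ℓ : ℕ) : Bn n :=
  ∑ σ ∈ permsWithin s ℓ, MonoidAlgebra.of ℚ (PPn n) (ppOfPerm σ)

theorem permSumWithin_zero (s : Finset (Fin n)) : permSumWithin s 0 = 1 := by
  rw [permSumWithin, permsWithin_zero, sum_singleton, ppOfPerm_one, map_one]

theorem permSumWithin_insert_succ {s : Finset (Fin n)} {a : Fin n} (has : a ∉ s) (k : ℕ) :
    permSumWithin (insert a s) (k + 1) = permSumWithin s (k + 1)
      + permSumWithin s k * ∑ j ∈ s, MonoidAlgebra.of ℚ (PPn n) (ppSwap j a) := by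
  rw [permSumWithin, ← sum_filter_add_sum_filter_not _ (fun σ => σ a = a),
    filter_apply_eq_permsWithin_insert has, permSumWithin, permSumWithin, sum_mul_sum,
    ← sum_product', ← sum_permsWithin_product_mul_swap _ has]
  congr 1
  refine sum_congr rfl fun p hp => ?_
  obtain ⟨hσ, hj⟩ := mem_product.mp hp
  have hσa : p.1 a = a := notMem_support.mp fun h => has ((mem_permsWithin.mp hσ).1 h)
  rw [← map_mul, ppOfPerm_mul_ppSwap hσa (ne_of_mem_of_not_mem hj has)]

end PartialPermutations

theorem orderedEsymm_xi_eq_permSumWithin {n m : ℕ} (hm : m ≤ n) (ℓ : ℕ) :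
    orderedEsymm (xi n) (univ.filter fun i : Fin n => (i : ℕ) < m) ℓ
      = permSumWithin (univ.filter fun i : Fin n => (i : ℕ) < m) ℓ := by
  induction m generalizing ℓ with
  | zero =>
    rw [filter_false_of_mem fun (i : Fin n) _ => Nat.not_lt_zero i]
    cases ℓ with
    | zero => rw [orderedEsymm_zero, permSumWithin_zero]
    | succ k =>
      rw [orderedEsymm_of_card_lt _ (by simp), permSumWithin, permsWithin_empty_succ, sum_empty]
  | succ m ih =>
    set a : Fin n := ⟨m, hm⟩
    have hlt : ∀ b ∈ univ.filter fun i : Fin n => (i : ℕ) < m, b < a :=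
      fun b hb => (mem_filter.mp hb).2
    have hs : (univ.filter fun i : Fin n => (i : ℕ) < m + 1)
        = insert a (univ.filter fun i : Fin n => (i : ℕ) < m) := by
      ext i
      simp only [mem_filter, mem_univ, true_and, mem_insert, a, Fin.ext_iff]
      omega
    have hxi : xi n a = ∑ j ∈ univ.filter fun i : Fin n => (i : ℕ) < m,
        MonoidAlgebra.of ℚ (PPn n) (ppSwap j a) := rfl
    cases ℓ with
    | zero => rw [orderedEsymm_zero, permSumWithin_zero]
    | succ k =>
      rw [hs, orderedEsymm_insert_succ _ hlt, permSumWithin_insert_succ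
        (fun h => lt_irrefl a (hlt a h)), ih (by omega), ih (by omega), hxi]

/-- `e_ℓ(ξ_1,…,ξ_n) = Σ_{σ ∈ S_n, κ(σ)=n-ℓ} (σ, supp(σ))`. -/
theorem eXi_eq (n ℓ : ℕ) (hl : ℓ ≤ n) :
    eXi n ℓ = ∑ σ : Equiv.Perm (Fin n),
      if kappa σ = n - ℓ then
        MonoidAlgebra.of ℚ (PPn n) ⟨(σ, σ.support), fun _ hx => Equiv.Perm.notMem_support.mp hx⟩
      else 0 := by
  have h := orderedEsymm_xi_eq_permSumWithin (n := n) le_rfl ℓ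
  rw [filter_true_of_mem fun i _ => i.isLt] at h
  rw [show eXi n ℓ = orderedEsymm (xi n) univ ℓ from rfl, h, permSumWithin, permsWithin,
    sum_filter]
  refine sum_congr rfl fun σ _ => if_congr ?_ rfl rfl
  rw [and_iff_right (subset_univ _)]
  omega
end

section
/- For each finite set d ⊆ {1,…,n}, the map φ_d : B_n → ℚ[S_d] defined on basis elements by φ_d(σ,d') = σ if d' ⊆ d and 0 otherwise, is an algebra homomorphism, and the resulting map B_n → ⊕_{d ⊆ {1,…,n}} ℚ[S_d] is an algebra isomorphism. -/
/-- A permutation fixing everything outside `e ⊆ d` stabilizes `d`. -/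
lemma perm_mem_iff {n : ℕ} (σ : Equiv.Perm (Fin n)) (e d : Finset (Fin n))
    (hfix : ∀ x ∉ e, σ x = x) (hed : e ⊆ d) : ∀ x, x ∈ d ↔ σ x ∈ d := by
  have key : ∀ x ∈ e, σ x ∈ e := by
    intro x hx
    by_contra h
    have h2 := hfix (σ x) h
    exact h (by rw [σ.injective h2]; exact hx)
  intro x
  by_cases hx : x ∈ e
  · exact ⟨fun _ => hed (key x hx), fun _ => hed hx⟩
  · rw [hfix x hx]

/-!
With respect to the basis of partial permutations ordered by the size of their support, `φ` is
unitriangular: the coefficient of `σ|_{d'}` in `φ_{d'}(x)` is the coefficient of `(σ, d')` in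
`x` plus contributions of basis elements with strictly smaller support. Hence `φ` is injective,
and it is bijective because a partial permutation is the same as a subset `d` with a permutation
of `d`, so both sides have dimension `∑_d |d|!`.
-/

open Equiv Equiv.Perm

lemma MonoidAlgebra.finrank_eq_card (k G : Type*) [Field k] [Fintype G] :
    Module.finrank k (MonoidAlgebra k G) = Fintype.card G :=
  (MonoidAlgebra.coeffLinearEquiv k).finrank_eq.trans (Module.finrank_finsupp_self k)

namespace PPn

variable {n : ℕ}

def restrict (p : PPn n) (d : Finset (Fin n)) (h : p.1.2 ⊆ d) : Perm {x // x ∈ d} :=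
  p.1.1.subtypePerm fun x => (perm_mem_iff p.1.1 p.1.2 d p.2 h x).symm

lemma ofSubtype_restrict (p : PPn n) (d : Finset (Fin n)) (h : p.1.2 ⊆ d) :
    ofSubtype (p.restrict d h) = p.1.1 :=
  ofSubtype_subtypePerm _ fun x hx => h (not_imp_comm.mp (p.2 x) hx)

lemma mul_subset_iff {p q : PPn n} {d : Finset (Fin n)} :
    (p * q).1.2 ⊆ d ↔ p.1.2 ⊆ d ∧ q.1.2 ⊆ d :=
  Finset.union_subset_iff

lemma restrict_one (d : Finset (Fin n)) (h : (1 : PPn n).1.2 ⊆ d) :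
    (1 : PPn n).restrict d h = 1 :=
  rfl

lemma restrict_mul (p q : PPn n) (d : Finset (Fin n)) (h : (p * q).1.2 ⊆ d) :
    (p * q).restrict d h =
      p.restrict d (Finset.union_subset_left h) * q.restrict d (Finset.union_subset_right h) :=
  rfl

lemma eq_of_restrict_eq {p q : PPn n} (hd : q.1.2 = p.1.2)
    (h : q.restrict p.1.2 hd.le = p.restrict p.1.2 le_rfl) : q = p := by
  refine Subtype.ext (Prod.ext ?_ hd)
  rw [← q.ofSubtype_restrict p.1.2 hd.le, h, ofSubtype_restrict]

def equivSigmaPerm (n : ℕ) : PPn n ≃ Σ d : Finset (Fin n), Perm {x // x ∈ d} where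
  toFun p := ⟨p.1.2, p.restrict p.1.2 subset_rfl⟩
  invFun q := ⟨(ofSubtype q.2, q.1), fun _ => q.2.ofSubtype_apply_of_not_mem⟩
  left_inv p := Subtype.ext (Prod.ext (p.ofSubtype_restrict p.1.2 subset_rfl) rfl)
  right_inv q := Sigma.ext rfl (heq_of_eq (subtypePerm_ofSubtype q.2))

lemma card_eq_sum_card_perm (n : ℕ) :
    Fintype.card (PPn n) = ∑ d : Finset (Fin n), Fintype.card (Perm {x // x ∈ d}) := by
  rw [Fintype.card_congr (equivSigmaPerm n), Fintype.card_sigma]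

end PPn

section CommSemiring

variable (k : Type*) [CommSemiring k] (n : ℕ)

noncomputable def phiMonoidHom :
    PPn n →* ∀ d : Finset (Fin n), MonoidAlgebra k (Perm {x // x ∈ d}) where
  toFun p d := if h : p.1.2 ⊆ d then MonoidAlgebra.of k _ (p.restrict d h) else 0
  map_one' := funext fun d => by
    rw [dif_pos (show (1 : PPn n).1.2 ⊆ d from Finset.empty_subset d), PPn.restrict_one,
      map_one, Pi.one_apply]
  map_mul' p q := funext fun d => by
    simp only [Pi.mul_apply]
    by_cases h : p.1.2 ⊆ d ∧ q.1.2 ⊆ d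
    · rw [dif_pos (PPn.mul_subset_iff.2 h), dif_pos h.1, dif_pos h.2, PPn.restrict_mul, map_mul]
    · rw [dif_neg (mt PPn.mul_subset_iff.1 h)]
      rcases not_and_or.1 h with h | h <;> simp [h]

noncomputable def phiAlgHom :
    MonoidAlgebra k (PPn n) →ₐ[k] ∀ d : Finset (Fin n), MonoidAlgebra k (Perm {x // x ∈ d}) :=
  MonoidAlgebra.lift k _ _ (phiMonoidHom k n)

variable {k n}

lemma phiMonoidHom_apply (p : PPn n) (d : Finset (Fin n)) :
    phiMonoidHom k n p d = if h : p.1.2 ⊆ d then MonoidAlgebra.of k _ (p.restrict d h) else 0 :=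
  rfl

lemma phiAlgHom_of (p : PPn n) :
    phiAlgHom k n (MonoidAlgebra.of k _ p) = phiMonoidHom k n p :=
  MonoidAlgebra.lift_of _ _

lemma coeff_phiMonoidHom_restrict {p q : PPn n} (hq : ¬q.1.2 ⊂ p.1.2) :
    (phiMonoidHom k n q p.1.2).coeff (p.restrict p.1.2 subset_rfl) = if q = p then 1 else 0 := by
  by_cases hsub : q.1.2 ⊆ p.1.2
  · have hd : q.1.2 = p.1.2 := hsub.eq_of_not_ssubset hq
    rw [phiMonoidHom_apply, dif_pos hsub, MonoidAlgebra.of_apply, MonoidAlgebra.coeff_single,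
      Finsupp.single_apply]
    exact if_congr ⟨PPn.eq_of_restrict_eq hd, fun h => by subst h; rfl⟩ rfl rfl
  · rw [phiMonoidHom_apply, dif_neg hsub, if_neg fun h : q = p => hsub (h ▸ subset_rfl)]
    rfl

lemma coeff_phiAlgHom (x : MonoidAlgebra k (PPn n)) (d : Finset (Fin n))
    (τ : Perm {x // x ∈ d}) :
    (phiAlgHom k n x d).coeff τ =
      ∑ q ∈ x.coeff.support, x.coeff q * (phiMonoidHom k n q d).coeff τ := by
  simp [phiAlgHom, MonoidAlgebra.lift_apply, Finsupp.sum, MonoidAlgebra.coeff_sum,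
    Finsupp.finsetSum_apply]

end CommSemiring

/- Take `p` in the support of `x` with `|p.1.2|` minimal: no other element of the support
contributes to the coefficient of `p.restrict` in `φ_{p.1.2} x`. -/
lemma phiAlgHom_injective {k : Type*} [CommRing k] {n : ℕ} :
    Function.Injective (phiAlgHom k n) := by
  rw [injective_iff_map_eq_zero]
  intro x hx
  by_contra hx0
  obtain ⟨p, hp, hmin⟩ :=
    x.coeff.support.exists_min_image (fun p => p.1.2.card) (by simpa using hx0)
  have key : (phiAlgHom k n x p.1.2).coeff (p.restrict p.1.2 subset_rfl) = x.coeff p := by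
    rw [coeff_phiAlgHom, Finset.sum_eq_single_of_mem p hp, coeff_phiMonoidHom_restrict
      (ssubset_irrefl _), if_pos rfl, mul_one]
    intro q hq hqp
    have : ¬q.1.2 ⊂ p.1.2 := fun h => (hmin q hq).not_gt (Finset.card_lt_card h)
    rw [coeff_phiMonoidHom_restrict this, if_neg hqp, mul_zero]
  rw [hx] at key
  exact Finsupp.mem_support_iff.1 hp key.symm

theorem phiAlgHom_bijective {k : Type*} [Field k] {n : ℕ} :
    Function.Bijective (phiAlgHom k n) := by
  have hdim : Module.finrank k (MonoidAlgebra k (PPn n)) =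
      Module.finrank k (∀ d : Finset (Fin n), MonoidAlgebra k (Perm {x // x ∈ d})) := by
    simp only [Module.finrank_pi_fintype, MonoidAlgebra.finrank_eq_card,
      PPn.card_eq_sum_card_perm]
  exact ⟨phiAlgHom_injective, (LinearMap.injective_iff_surjective_of_finrank_eq_finrank hdim
    (f := (phiAlgHom k n).toLinearMap)).1 phiAlgHom_injective⟩

/-- the maps `φ_d : B_n → ℚ[S_d]`, `φ_d(σ,d') = σ|_d` if `d' ⊆ d` and `0`
otherwise, are algebra homomorphisms, and together give an algebra isomorphism
`B_n ≅ ⊕_{d ⊆ {1,…,n}} ℚ[S_d]`. -/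
theorem phi_isomorphism (n : ℕ) :
    ∃ Φ : Bn n →ₐ[ℚ] (∀ d : Finset (Fin n), MonoidAlgebra ℚ (Equiv.Perm {x // x ∈ d})),
      Function.Bijective Φ ∧
      ∀ (p : PPn n) (d : Finset (Fin n)),
        Φ (MonoidAlgebra.of ℚ (PPn n) p) d
          = if h : p.1.2 ⊆ d then
              MonoidAlgebra.of ℚ (Equiv.Perm {x // x ∈ d})
                (p.1.1.subtypePerm (fun x => (perm_mem_iff p.1.1 p.1.2 d p.2 h x).symm))
            else 0 :=
  ⟨phiAlgHom ℚ n, phiAlgHom_bijective, fun p d => by rw [phiAlgHom_of]; rfl⟩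
end

section
/- The fixed points of the S_n-action τ·(σ,d) = (τστ^{-1}, τ(d)) on B_n form a subalgebra A_n of B_n, and for any symmetric polynomial f in n variables, f(ξ_1,…,ξ_n) belongs to A_n. -/
/-- The action of `τ ∈ S_n` on partial permutations: `τ·(σ,d) = (τστ⁻¹, τ(d))`. -/
def conjPP {n : ℕ} (τ : Equiv.Perm (Fin n)) (p : PPn n) : PPn n :=
  ⟨(τ * p.1.1 * τ⁻¹, p.1.2.image τ), by
    intro x hx
    have hx' : τ⁻¹ x ∉ p.1.2 := fun h => hx (Finset.mem_image.mpr ⟨_, h, by simp⟩)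
    simpa [Equiv.Perm.mul_apply] using congrArg τ (p.2 _ hx')⟩

/-- Evaluation of a polynomial in `n` variables at the (commuting) partial Jucys-Murphy
elements, the monomials being evaluated as products in increasing order of the variables. -/
noncomputable def evalXi (n : ℕ) (f : MvPolynomial (Fin n) ℚ) : Bn n :=
  ∑ m ∈ f.support, f.coeff m • ((List.finRange n).map fun i => xi n i ^ m i).prod

/-!
`S_n` acts on `B_n` by algebra automorphisms (`MonoidAlgebra.domCongr` of the conjugation
action on partial permutations), so its fixed points form a subalgebra. Since the adjacent
transpositions `s = (k k+1)` generate `S_n`, it suffices that each fixes `f(ξ)`. With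
`T = ((k k+1), {k, k+1})` one has `s ξ_k = ξ_{k+1} - T`, `s ξ_{k+1} = ξ_k + T`, `s ξ_i = ξ_i`
otherwise, and `ξ_{k+1} T = T ξ_k + T²`; so the commuting pair `(s ξ_k, s ξ_{k+1})` has the same
sum and product as `(ξ_k, ξ_{k+1})`. For two such pairs `A^p B^q + A^q B^p = a^p b^q + a^q b^p`
(Newton's recurrence for power sums), and averaging the monomials of the `s`-invariant
polynomial `f` over `s` gives `s f(ξ) = f(ξ)`.
-/

section CommutingPairs

variable {R : Type*} [Ring R] {a b c d : R}

lemma Commute.pow_add_two_add_pow_add_two (h : Commute a b) (r : ℕ) :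
    a ^ (r + 2) + b ^ (r + 2)
      = (a + b) * (a ^ (r + 1) + b ^ (r + 1)) - a * b * (a ^ r + b ^ r) := by
  have hba : b * a ^ (r + 1) = a * b * a ^ r := by
    rw [pow_succ', ← mul_assoc, h.eq]
  rw [add_mul, mul_add, mul_add, mul_add, hba, pow_succ' a (r + 1), pow_succ' b (r + 1),
    pow_succ' b r]
  simp only [mul_assoc]
  abel

lemma pow_add_pow_eq_of_add_eq_of_mul_eq (hab : Commute a b) (hcd : Commute c d)
    (hs : a + b = c + d) (hp : a * b = c * d) (r : ℕ) : a ^ r + b ^ r = c ^ r + d ^ r := by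
  induction r using Nat.twoStepInduction with
  | zero => simp
  | one => simpa using hs
  | more r ih ih' =>
    rw [hab.pow_add_two_add_pow_add_two, hcd.pow_add_two_add_pow_add_two, ih, ih', hs, hp]

lemma pow_mul_pow_add_pow_mul_pow_eq_of_add_eq_of_mul_eq (hab : Commute a b) (hcd : Commute c d)
    (hs : a + b = c + d) (hp : a * b = c * d) (p q : ℕ) :
    a ^ p * b ^ q + a ^ q * b ^ p = c ^ p * d ^ q + c ^ q * d ^ p := by
  wlog hqp : q ≤ p generalizing p q
  · rw [add_comm (a ^ p * b ^ q), add_comm (c ^ p * d ^ q)]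
    exact this q p (le_of_not_ge hqp)
  obtain ⟨r, rfl⟩ := Nat.exists_eq_add_of_le hqp
  have factor : ∀ x y : R, Commute x y →
      x ^ (q + r) * y ^ q + x ^ q * y ^ (q + r) = (x * y) ^ q * (x ^ r + y ^ r) := by
    intro x y hxy
    rw [hxy.mul_pow, pow_add, pow_add, mul_add, mul_assoc, mul_assoc, mul_assoc,
      (hxy.pow_pow r q).eq]
  rw [factor a b hab, factor c d hcd, hp, pow_add_pow_eq_of_add_eq_of_mul_eq hab hcd hs hp]

end CommutingPairs

lemma List.infix_finRange_castSucc_succ {m : ℕ} (k : Fin m) :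
    [k.castSucc, k.succ] <:+: List.finRange (m + 1) := by
  refine List.infix_iff_getElem?.2 ⟨k, ?_, fun i hi => ?_⟩
  · simp only [List.length_cons, List.length_nil, List.length_finRange]
    omega
  simp only [List.length_cons, List.length_nil] at hi
  have hk : i + k < (List.finRange (m + 1)).length := by rw [List.length_finRange]; omega
  simp only [List.getElem?_eq_getElem hk, List.getElem_finRange, Option.some.injEq, Fin.ext_iff,
    Fin.val_cast]
  obtain rfl | rfl : i = 0 ∨ i = 1 := by omega
  all_goals
    simp only [List.getElem_cons_zero, List.getElem_cons_succ, Fin.val_castSucc, Fin.val_succ]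
    omega

lemma Equiv.Perm.smul_eq_self_of_forall_swap_castSucc_succ {m : ℕ} {α : Type*}
    [MulAction (Equiv.Perm (Fin (m + 1))) α] {x : α}
    (h : ∀ k : Fin m, Equiv.swap k.castSucc k.succ • x = x) (τ : Equiv.Perm (Fin (m + 1))) :
    τ • x = x := by
  have hτ : τ ∈ Submonoid.closure (Set.range fun k : Fin m => Equiv.swap k.castSucc k.succ) := by
    rw [Equiv.Perm.mclosure_swap_castSucc_succ]
    exact Submonoid.mem_top τ
  refine (Submonoid.closure_le (S := (MulAction.stabilizer _ x).toSubmonoid)).2 ?_ hτ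
  rintro _ ⟨k, rfl⟩
  exact h k

lemma Equiv.swap_apply_lt_iff {α : Type*} [DecidableEq α] [LT α] {j c s : α}
    (h : j < s ↔ c < s) (l : α) :
    Equiv.swap j c l < s ↔ l < s := by
  rcases eq_or_ne l j with rfl | hj
  · rw [Equiv.swap_apply_left, h]
  rcases eq_or_ne l c with rfl | hc
  · rw [Equiv.swap_apply_right, h]
  · rw [Equiv.swap_apply_of_ne_of_ne hj hc]

lemma Finset.sum_filter_lt_comp_swap {α M : Type*} [Fintype α] [LinearOrder α] [AddCommMonoid M]
    {j c s : α} (h : j < s ↔ c < s) (g : α → M) :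
    ∑ l ∈ univ.filter (· < s), g (Equiv.swap j c l) = ∑ l ∈ univ.filter (· < s), g l :=
  Finset.sum_equiv (Equiv.swap j c) (by simp [Equiv.swap_apply_lt_iff h]) fun _ _ => rfl

section OrderedEval

variable {n : ℕ} {K A : Type*} [CommRing K] [Ring A] [Algebra K A]

def orderedMonomial (y : Fin n → A) (μ : Fin n → ℕ) : A :=
  ((List.finRange n).map fun i => y i ^ μ i).prod

noncomputable def orderedEval (y : Fin n → A) (f : MvPolynomial (Fin n) K) : A :=
  ∑ μ ∈ f.support, f.coeff μ • orderedMonomial y μ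

lemma map_orderedEval {B F : Type*} [Ring B] [Algebra K B] [FunLike F A B] [AlgHomClass F K A B]
    (φ : F) (y : Fin n → A) (f : MvPolynomial (Fin n) K) :
    φ (orderedEval y f) = orderedEval (fun i => φ (y i)) f := by
  simp [orderedEval, orderedMonomial, map_list_prod, Function.comp_def]

lemma smul_orderedEval {G : Type*} [Monoid G] [MulSemiringAction G A] [SMulCommClass G K A]
    (g : G) (y : Fin n → A) (f : MvPolynomial (Fin n) K) :
    g • orderedEval y f = orderedEval (fun i => g • y i) f :=
  map_orderedEval (MulSemiringAction.toAlgHom K A g) y f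

lemma orderedEval_rename (σ : Equiv.Perm (Fin n)) (y : Fin n → A) (f : MvPolynomial (Fin n) K) :
    orderedEval y (MvPolynomial.rename σ f)
      = ∑ μ ∈ f.support, f.coeff μ • orderedMonomial y (μ ∘ σ.symm) := by
  classical
  rw [orderedEval, MvPolynomial.support_rename_of_injective σ.injective,
    Finset.sum_image fun μ _ ν _ h => Finsupp.mapDomain_injective σ.injective h]
  refine Finset.sum_congr rfl fun μ _ => ?_
  rw [MvPolynomial.coeff_rename_mapDomain _ σ.injective, ← Finsupp.equivMapDomain_eq_mapDomain]
  rfl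

variable {y z : Fin n → A} {a b : Fin n}

lemma orderedMonomial_add_orderedMonomial_swap (hab : [a, b] <:+: List.finRange n)
    (hzy : ∀ i, i ≠ a → i ≠ b → z i = y i) (hy : Commute (y a) (y b))
    (hz : Commute (z a) (z b)) (hs : z a + z b = y a + y b) (hp : z a * z b = y a * y b)
    (μ : Fin n → ℕ) :
    orderedMonomial z μ + orderedMonomial z (μ ∘ Equiv.swap a b)
      = orderedMonomial y μ + orderedMonomial y (μ ∘ Equiv.swap a b) := by
  obtain ⟨s, t, hst⟩ := hab
  have hne : ∀ i ∈ s ++ t, i ≠ a ∧ i ≠ b := by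
    have hnodup := hst ▸ List.nodup_finRange n
    simp only [List.append_assoc, List.cons_append, List.nil_append, List.nodup_append,
      List.nodup_cons, List.mem_cons] at hnodup
    obtain ⟨-, ⟨hat, hbt, -⟩, hs⟩ := hnodup
    intro i hi
    rcases List.mem_append.1 hi with hi | hi
    · exact ⟨hs i hi a (Or.inl rfl), hs i hi b (Or.inr (Or.inl rfl))⟩
    · exact ⟨fun h => hat (Or.inr (h ▸ hi)), fun h => hbt (h ▸ hi)⟩
  set S := (s.map fun i => y i ^ μ i).prod
  set T := (t.map fun i => y i ^ μ i).prod
  have hsplit : ∀ (w : Fin n → A) (ν : Fin n → ℕ), (∀ i ∈ s ++ t, w i ^ ν i = y i ^ μ i) →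
      orderedMonomial w ν = S * (w a ^ ν a * w b ^ ν b) * T := by
    intro w ν hw
    rw [orderedMonomial, ← hst]
    simp only [List.map_append, List.prod_append, List.map_cons, List.prod_cons, List.map_nil,
      List.prod_nil, mul_one, mul_assoc]
    rw [List.map_congr_left fun i hi => hw i (List.mem_append_left t hi),
      List.map_congr_left fun i hi => hw i (List.mem_append_right s hi)]
  have hfix : ∀ i ∈ s ++ t, Equiv.swap a b i = i := fun i hi =>
    Equiv.swap_apply_of_ne_of_ne (hne i hi).1 (hne i hi).2
  rw [hsplit z μ fun i hi => by rw [hzy i (hne i hi).1 (hne i hi).2],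
    hsplit z _ fun i hi => by rw [Function.comp_apply, hfix i hi, hzy i (hne i hi).1 (hne i hi).2],
    hsplit y μ fun _ _ => rfl, hsplit y _ fun i hi => by rw [Function.comp_apply, hfix i hi]]
  simp only [Function.comp_apply, Equiv.swap_apply_left, Equiv.swap_apply_right, ← mul_add,
    ← add_mul]
  rw [pow_mul_pow_add_pow_mul_pow_eq_of_add_eq_of_mul_eq hz hy hs hp]

lemma orderedEval_eq_of_rename_swap_eq [Invertible (2 : K)] (hab : [a, b] <:+: List.finRange n)
    (hzy : ∀ i, i ≠ a → i ≠ b → z i = y i) (hy : Commute (y a) (y b))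
    (hz : Commute (z a) (z b)) (hs : z a + z b = y a + y b) (hp : z a * z b = y a * y b)
    (f : MvPolynomial (Fin n) K) (hf : MvPolynomial.rename (Equiv.swap a b) f = f) :
    orderedEval z f = orderedEval y f := by
  have two_smul_orderedEval : ∀ w : Fin n → A, (2 : K) • orderedEval w f = ∑ μ ∈ f.support,
      f.coeff μ • (orderedMonomial w μ + orderedMonomial w (μ ∘ Equiv.swap a b)) := by
    intro w
    conv_lhs => rw [two_smul]; arg 2; rw [← hf]
    rw [orderedEval_rename, Equiv.symm_swap, orderedEval, ← Finset.sum_add_distrib]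
    simp only [smul_add]
  have h := two_smul_orderedEval z
  simp only [orderedMonomial_add_orderedMonomial_swap hab hzy hy hz hs hp,
    ← two_smul_orderedEval y] at h
  simpa [smul_smul] using congrArg (⅟(2 : K) • ·) h

end OrderedEval

namespace PPn

variable {n : ℕ}

lemma val_one : (1 : PPn n).1 = (1, ∅) := rfl

lemma val_mul (p q : PPn n) : (p * q).1 = (p.1.1 * q.1.1, p.1.2 ∪ q.1.2) := rfl

instance : SMul (Equiv.Perm (Fin n)) (PPn n) := ⟨conjPP⟩

lemma val_smul (τ : Equiv.Perm (Fin n)) (p : PPn n) :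
    (τ • p).1 = (τ * p.1.1 * τ⁻¹, p.1.2.image τ) := rfl

instance : MulDistribMulAction (Equiv.Perm (Fin n)) (PPn n) where
  one_smul p := Subtype.ext <| by simp [val_smul]
  mul_smul σ τ p := Subtype.ext <| by simp [val_smul, mul_assoc, Finset.image_image]
  smul_mul τ p q := Subtype.ext <| by simp [val_smul, val_mul, mul_assoc, Finset.image_union]
  smul_one τ := Subtype.ext <| by simp [val_smul, val_one]

lemma smul_ppSwap (τ : Equiv.Perm (Fin n)) (j i : Fin n) :
    τ • ppSwap j i = ppSwap (τ j) (τ i) :=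
  Subtype.ext <| by simp [val_smul, ppSwap, Equiv.swap_apply_apply]

/-- `p.1.1` fixes every point outside `p.1.2`, so `q.1.2.image p.1.1 ∪ p.1.2 = q.1.2 ∪ p.1.2`. -/
lemma mul_eq_smul_mul (p q : PPn n) : p * q = p.1.1 • q * p := by
  refine Subtype.ext (Prod.ext (by simp [val_mul, val_smul, mul_assoc]) ?_)
  simp only [val_mul, val_smul]
  ext x
  by_cases hx : x ∈ p.1.2
  · simp [hx]
  · have hfix : p.1.1.symm x = x := by rw [Equiv.symm_apply_eq, p.2 x hx]
    simp [hx, Finset.mem_image, ← Equiv.eq_symm_apply, hfix]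

lemma ppSwap_comm (j i : Fin n) : ppSwap j i = ppSwap i j :=
  Subtype.ext (Prod.ext (Equiv.swap_comm j i) (Finset.pair_comm j i))

end PPn

namespace Bn

open MonoidAlgebra

variable {n : ℕ}

noncomputable instance : MulSemiringAction (Equiv.Perm (Fin n)) (Bn n) :=
  MulSemiringAction.compHom (Bn n) <| (MonoidAlgebra.domCongrAut (R := ℚ) (A := ℚ)).comp
    (MulDistribMulAction.toMulAut (Equiv.Perm (Fin n)) (PPn n))

lemma smul_def (τ : Equiv.Perm (Fin n)) (x : Bn n) :
    τ • x = MonoidAlgebra.domCongr ℚ ℚ (MulDistribMulAction.toMulAut _ (PPn n) τ) x := rfl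

instance : SMulCommClass (Equiv.Perm (Fin n)) ℚ (Bn n) :=
  ⟨fun τ q x => by simp only [smul_def, map_smul]⟩

lemma smul_of (τ : Equiv.Perm (Fin n)) (p : PPn n) :
    τ • of ℚ (PPn n) p = of ℚ (PPn n) (τ • p) := by
  simp [smul_def, of_apply]

lemma coeff_smul (τ : Equiv.Perm (Fin n)) (x : Bn n) :
    (τ • x).coeff = Finsupp.mapDomain (conjPP τ) x.coeff := by
  rw [show conjPP τ = (MulDistribMulAction.toMulAut _ (PPn n) τ).toEquiv from rfl,
    ← Finsupp.equivMapDomain_eq_mapDomain]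
  ext p
  simp [smul_def]

lemma of_ppSwap_mul_of (j i : Fin n) (p : PPn n) :
    of ℚ _ (ppSwap j i) * of ℚ _ p = of ℚ _ (Equiv.swap j i • p) * of ℚ _ (ppSwap j i) := by
  rw [← map_mul, ← map_mul, PPn.mul_eq_smul_mul]
  rfl

lemma smul_xi (τ : Equiv.Perm (Fin n)) (i : Fin n) :
    τ • xi n i = ∑ j ∈ Finset.univ.filter (· < i), of ℚ _ (ppSwap (τ j) (τ i)) := by
  simp only [xi, Finset.smul_sum, smul_of, PPn.smul_ppSwap]

lemma xi_commute (c s : Fin n) : Commute (xi n c) (xi n s) := by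
  wlog hcs : c < s generalizing c s
  · rcases (not_lt.1 hcs).lt_or_eq with hsc | rfl
    · exact (this s c hsc).symm
    · exact Commute.refl _
  -- `(j c) (l s) = (swap j c l, s) (j c)`, and `swap j c` permutes `{l | l < s}`
  have hconj : ∀ j < c,
      ∑ l ∈ Finset.univ.filter (· < s), of ℚ _ (ppSwap j c) * of ℚ _ (ppSwap l s)
        = ∑ l ∈ Finset.univ.filter (· < s), of ℚ _ (ppSwap l s) * of ℚ _ (ppSwap j c) := by
    intro j hjc
    have hjs := hjc.trans hcs
    calc _ = ∑ l ∈ Finset.univ.filter (· < s),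
            of ℚ _ (ppSwap (Equiv.swap j c l) s) * of ℚ _ (ppSwap j c) :=
          Finset.sum_congr rfl fun l _ => by
            rw [of_ppSwap_mul_of, PPn.smul_ppSwap, Equiv.swap_apply_of_ne_of_ne hjs.ne' hcs.ne']
      _ = _ := Finset.sum_filter_lt_comp_swap (iff_of_true hjs hcs)
          fun l => of ℚ _ (ppSwap l s) * of ℚ _ (ppSwap j c)
  rw [Commute, SemiconjBy, xi, xi, Finset.sum_mul_sum, Finset.sum_mul_sum,
    Finset.sum_comm (s := Finset.univ.filter (· < s))]
  exact Finset.sum_congr rfl fun j hj => hconj j (by simpa using hj)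

section AdjacentSwap

variable {m : ℕ} (k : Fin m)

lemma xi_succ : xi (m + 1) k.succ = ∑ j ∈ Finset.univ.filter (· < k.castSucc),
    of ℚ _ (ppSwap j k.succ) + of ℚ _ (ppSwap k.castSucc k.succ) := by
  have hfilter : Finset.univ.filter (· < k.succ)
      = insert k.castSucc (Finset.univ.filter (· < (k.castSucc : Fin (m + 1)))) := by
    ext j
    simp only [Finset.mem_filter, Finset.mem_univ, true_and, Finset.mem_insert, Fin.lt_def,
      Fin.ext_iff, Fin.val_succ, Fin.val_castSucc]
    omega
  rw [xi, hfilter, Finset.sum_insert (by simp)]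
  exact add_comm _ _

lemma swap_smul_xi_of_ne {i : Fin (m + 1)} (ha : i ≠ k.castSucc) (hb : i ≠ k.succ) :
    Equiv.swap k.castSucc k.succ • xi (m + 1) i = xi (m + 1) i := by
  have hlt : k.castSucc < i ↔ k.succ < i := by
    have ha' : (i : ℕ) ≠ k := fun h => ha (Fin.ext h)
    have hb' : (i : ℕ) ≠ k + 1 := fun h => hb (Fin.ext h)
    simp only [Fin.lt_def, Fin.val_castSucc, Fin.val_succ]
    omega
  rw [smul_xi, Equiv.swap_apply_of_ne_of_ne ha hb]
  exact Finset.sum_filter_lt_comp_swap hlt fun j => of ℚ _ (ppSwap j i)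

lemma swap_smul_xi_castSucc :
    Equiv.swap k.castSucc k.succ • xi (m + 1) k.castSucc
      = xi (m + 1) k.succ - of ℚ _ (ppSwap k.castSucc k.succ) := by
  rw [smul_xi, xi_succ, add_sub_cancel_right, Equiv.swap_apply_left]
  refine Finset.sum_congr rfl fun j hj => ?_
  have hj : j < k.castSucc := by simpa using hj
  rw [Equiv.swap_apply_of_ne_of_ne hj.ne (hj.trans Fin.castSucc_lt_succ).ne]

lemma swap_smul_xi_succ :
    Equiv.swap k.castSucc k.succ • xi (m + 1) k.succ
      = xi (m + 1) k.castSucc + of ℚ _ (ppSwap k.castSucc k.succ) := by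
  have h := congrArg (Equiv.swap k.castSucc k.succ • ·) (swap_smul_xi_castSucc k)
  rw [smul_smul, Equiv.swap_mul_self, one_smul, smul_sub, smul_of, PPn.smul_ppSwap,
    Equiv.swap_apply_left, Equiv.swap_apply_right, PPn.ppSwap_comm k.succ] at h
  rw [h, sub_add_cancel]

lemma xi_succ_mul_of_ppSwap :
    xi (m + 1) k.succ * of ℚ _ (ppSwap k.castSucc k.succ)
      = of ℚ _ (ppSwap k.castSucc k.succ) * xi (m + 1) k.castSucc
        + of ℚ _ (ppSwap k.castSucc k.succ) * of ℚ _ (ppSwap k.castSucc k.succ) := by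
  rw [xi_succ, add_mul, Finset.sum_mul, xi, Finset.mul_sum]
  congr 1
  refine Finset.sum_congr rfl fun j hj => ?_
  have hj : j < k.castSucc := by simpa using hj
  rw [of_ppSwap_mul_of k.castSucc k.succ, PPn.smul_ppSwap, Equiv.swap_apply_of_ne_of_ne hj.ne
    (hj.trans Fin.castSucc_lt_succ).ne, Equiv.swap_apply_left]

end AdjacentSwap

lemma evalXi_eq_orderedEval (f : MvPolynomial (Fin n) ℚ) :
    evalXi n f = orderedEval (xi n) f := rfl

lemma swap_smul_evalXi {m : ℕ} (k : Fin m) {f : MvPolynomial (Fin (m + 1)) ℚ}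
    (hf : f.IsSymmetric) :
    Equiv.swap k.castSucc k.succ • evalXi (m + 1) f = evalXi (m + 1) f := by
  have hcomm := xi_commute k.castSucc k.succ
  rw [evalXi_eq_orderedEval, smul_orderedEval]
  refine orderedEval_eq_of_rename_swap_eq (List.infix_finRange_castSucc_succ k)
    (fun i ha hb => swap_smul_xi_of_ne k ha hb) hcomm
    (hcomm.map (MulSemiringAction.toRingHom _ _ _)) ?_ ?_ f (hf _)
  · rw [swap_smul_xi_castSucc, swap_smul_xi_succ]
    abel
  · rw [swap_smul_xi_castSucc, swap_smul_xi_succ, sub_mul, mul_add, mul_add,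
      xi_succ_mul_of_ppSwap, hcomm.eq]
    abel

lemma evalXi_mem_fixedPoints {f : MvPolynomial (Fin n) ℚ} (hf : f.IsSymmetric) :
    evalXi n f ∈ FixedPoints.subalgebra ℚ (Bn n) (Equiv.Perm (Fin n)) := by
  intro τ
  cases n with
  | zero => rw [Subsingleton.elim τ 1, one_smul]
  | succ m =>
    exact Equiv.Perm.smul_eq_self_of_forall_swap_castSucc_succ (fun k => swap_smul_evalXi k hf) τ

lemma mem_fixedPoints_iff_mapDomain_coeff_eq (x : Bn n) :
    x ∈ FixedPoints.subalgebra ℚ (Bn n) (Equiv.Perm (Fin n))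
      ↔ ∀ τ : Equiv.Perm (Fin n), Finsupp.mapDomain (conjPP τ) x.coeff = x.coeff := by
  refine forall_congr' fun τ => ?_
  rw [← coeff_smul]
  exact coeff_inj.symm

end Bn

/-- the fixed points of the `S_n`-action on `B_n` form a subalgebra `A_n`,
and every symmetric polynomial in the partial Jucys-Murphy elements belongs to it. -/
theorem fixed_points_subalgebra_and_symmetric_JM (n : ℕ) :
    ∃ S : Subalgebra ℚ (Bn n),
      (S : Set (Bn n)) = {x | ∀ τ : Equiv.Perm (Fin n), Finsupp.mapDomain (conjPP τ) x.coeff = x.coeff} ∧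
      ∀ f : MvPolynomial (Fin n) ℚ, f.IsSymmetric → evalXi n f ∈ S :=
  ⟨FixedPoints.subalgebra ℚ (Bn n) (Equiv.Perm (Fin n)),
    Set.ext Bn.mem_fixedPoints_iff_mapDomain_coeff_eq, fun _ hf => Bn.evalXi_mem_fixedPoints hf⟩
end
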